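/- A regular language L is reversible if and only if its minimal trim partial DFA M contains no pattern consisting of distinct states p ≠ q, a letter a, and a word w such that p·a = q·a and (p·a)·w = p. -/

import Mathlib

/-- A partial deterministic finite automaton (partial DFA). -/
structure PDFA (Q A : Type) where
  step : Q → A → Option Q
  init : Q
  acc : Q → Prop

namespace PDFA

variable {Q A : Type}

/-- Extended (partial) transition function on words. -/
def run (M : PDFA Q A) : Q → List A → Option Q
  | q, [] => some q
  | q, a :: w => (M.step q a).bind fun q' => M.run q' w

/-- The language accepted from state `q`. -/
def LangFrom (M : PDFA Q A) (q : Q) : Set (List A) :=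
  {w | ∃ q', M.run q w = some q' ∧ M.acc q'}

/-- The language of the automaton. -/
def Lang (M : PDFA Q A) : Set (List A) := M.LangFrom M.init

/-- An automaton is reversible if distinct states are never merged by a letter. -/
def Reversible (M : PDFA Q A) : Prop :=
  ∀ p q a r, M.step p a = some r → M.step q a = some r → p = q

/-- `Θ` is a congruence: an equivalence relation saturating the final states and
compatible with the (partial) action, including definedness. -/
def IsCongruence (M : PDFA Q A) (Θ : Q → Q → Prop) : Prop :=
  Equivalence Θ ∧
  (∀ p q, Θ p q → (M.acc p ↔ M.acc q)) ∧
  (∀ p q a, Θ p q → ((M.step p a).isSome ↔ (M.step q a).isSome) ∧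
    ∀ p' q', M.step p a = some p' → M.step q a = some q' → Θ p' q')

/-- A reversible congruence: a congruence whose factor automaton is reversible,
equivalently `p·a Θ q·a` (both defined) implies `p Θ q`. -/
def IsRevCongruence (M : PDFA Q A) (Θ : Q → Q → Prop) : Prop :=
  M.IsCongruence Θ ∧
  ∀ p q a p' q', M.step p a = some p' → M.step q a = some q' → Θ p' q' → Θ p q

def Reachable (M : PDFA Q A) (q : Q) : Prop := ∃ w, M.run M.init w = some q

def Productive (M : PDFA Q A) (q : Q) : Prop := ∃ w, w ∈ M.LangFrom q

/-- A trim automaton: all states reachable and productive. -/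
def Trim (M : PDFA Q A) : Prop := ∀ q, M.Reachable q ∧ M.Productive q

/-- The set of access words of a state. -/
def AccessWords (M : PDFA Q A) (q : Q) : Set (List A) :=
  {w | M.run M.init w = some q}

/-- An `∞`-state: reachable by infinitely many words. -/
def InfState (M : PDFA Q A) (q : Q) : Prop := (M.AccessWords q).Infinite

/-- A `1`-state: reachable by exactly one word. -/
def OneState (M : PDFA Q A) (q : Q) : Prop := ∃! w, w ∈ M.AccessWords q

/-- A `⊕`-state: neither a `1`-state nor an `∞`-state. -/
def PlusState (M : PDFA Q A) (q : Q) : Prop := ¬ M.OneState q ∧ ¬ M.InfState q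

/-- An irreversible state: reachable from two distinct states by a common word. -/
def IrrevState (M : PDFA Q A) (r : Q) : Prop :=
  ∃ p₁ p₂ u, p₁ ≠ p₂ ∧ M.run p₁ u = some r ∧ M.run p₂ u = some r

/-- Zig-zag states: the least set containing the `∞`-states, closed under defined
forward transitions, and containing every `⊕`-state with a transition into the set. -/
inductive ZigZag (M : PDFA Q A) : Q → Prop
  | inf {q} : M.InfState q → ZigZag M q
  | fwd {q a q'} : ZigZag M q → M.step q a = some q' → ZigZag M q'
  | back {q a q'} : M.PlusState q → M.step q a = some q' → ZigZag M q' → ZigZag M q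

/-- A reduced reversible automaton: trim, reversible, with no nontrivial reversible
congruence. -/
def ReducedReversible (M : PDFA Q A) : Prop :=
  M.Trim ∧ M.Reversible ∧ ∀ Θ, M.IsRevCongruence Θ → ∀ p q, Θ p q → p = q

/-- `n`-fold repetition of a word. -/
def wpow (w : List A) (n : ℕ) : List A := (List.replicate n w).flatten

end PDFA

/-
Forward: if `p ≠ q`, `p·a = q·a = r` and `r·w = p`, put `c = a w`, so `q·c = p·c = p`. Let `u` reach
`q`. In a finite reversible automaton `N` for the same language the words `u cⁿ` all have defined
runs, so by pigeonhole and injectivity of the runs of `N` the words `u` and `u cᵐ` lead to the same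
state of `N` for some `m > 0`. Hence `q` and `p`, reached in `M` by `u` and `u cᵐ`, accept the same
language.

Backward: without the pattern, a transition merging two distinct states leaves the strongly connected
component of its source for good, so it is taken at most once along any run. Remembering the set of
component-leaving transitions taken so far therefore makes the automaton reversible.
-/

namespace PDFA

variable {Q A : Type}

theorem wpow_add (c : List A) (m n : ℕ) : wpow c (m + n) = wpow c m ++ wpow c n := by
  rw [wpow, List.replicate_add, List.flatten_append, wpow, wpow]

theorem wpow_succ (c : List A) (n : ℕ) : wpow c (n + 1) = wpow c n ++ c := by
  rw [wpow_add]
  simp [wpow]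

section Run

variable (M : PDFA Q A)

theorem run_append (s : Q) (u v : List A) :
    M.run s (u ++ v) = (M.run s u).bind fun q => M.run q v := by
  induction u generalizing s with
  | nil => rfl
  | cons a u ih =>
    simp only [List.cons_append, run]
    cases M.step s a <;> simp [ih]

theorem mem_lang_append_iff {u x : List A} {s : Q} (hu : M.run M.init u = some s) :
    u ++ x ∈ M.Lang ↔ x ∈ M.LangFrom s := by
  simp only [Lang, LangFrom, Set.mem_ofPred_eq, run_append, hu, Option.bind_some]

theorem isSome_run_of_append_mem_lang {u v : List A} (h : u ++ v ∈ M.Lang) :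
    (M.run M.init u).isSome := by
  obtain ⟨_, h, -⟩ := h
  rw [run_append] at h
  cases hu : M.run M.init u <;> simp_all

theorem run_wpow_of_run_eq_self {p : Q} {c : List A} (h : M.run p c = some p) (n : ℕ) :
    M.run p (wpow c n) = some p := by
  induction n with
  | zero => rfl
  | succ n ih => rw [wpow_succ, run_append, ih, Option.bind_some, h]

theorem run_map {Q' : Type} (N : PDFA Q' A) (f : Q' → Q)
    (hf : ∀ x a y, N.step x a = some y → M.step (f x) a = some (f y)) :
    ∀ {x y : Q'} {w : List A}, N.run x w = some y → M.run (f x) w = some (f y)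
  | _, _, [], h => by cases h; rfl
  | x, _, a :: _, h => by
    obtain ⟨x', hx', h'⟩ := Option.bind_eq_some_iff.1 h
    simp only [run, hf x a x' hx', Option.bind_some]
    exact run_map N f hf h'

end Run

theorem Reversible.run_injective {N : PDFA Q A} (hN : N.Reversible) :
    ∀ {x y z : Q} {w : List A}, N.run x w = some z → N.run y w = some z → x = y
  | _, _, _, [], hx, hy => Option.some.inj (hx.trans hy.symm)
  | x, y, _, a :: _, hx, hy => by
    obtain ⟨x', hx', hxz⟩ := Option.bind_eq_some_iff.1 hx
    obtain ⟨y', hy', hyz⟩ := Option.bind_eq_some_iff.1 hy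
    obtain rfl := hN.run_injective hxz hyz
    exact hN x y a x' hx' hy'

theorem Reversible.exists_run_wpow_eq_self [Finite Q] {N : PDFA Q A} (hN : N.Reversible)
    {s : Q} {c : List A} (h : ∀ n, (N.run s (wpow c n)).isSome) :
    ∃ m, 0 < m ∧ N.run s (wpow c m) = some s := by
  choose g hg using fun n => Option.isSome_iff_exists.1 (h n)
  obtain ⟨i, j, hne, hij⟩ := Finite.exists_ne_map_eq_of_infinite g
  wlog hlt : i < j generalizing i j
  · exact this j i hne.symm hij.symm (by omega)
  obtain ⟨m, rfl⟩ := Nat.exists_eq_add_of_lt hlt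
  have hloop : N.run (g (m + 1)) (wpow c i) = some (g i) := by
    rw [hij, ← hg, show i + m + 1 = m + 1 + i by omega, wpow_add, run_append, hg,
      Option.bind_some]
  exact ⟨m + 1, m.succ_pos, (hg _).trans (congrArg some (hN.run_injective hloop (hg i)))⟩

def Reach (M : PDFA Q A) (p q : Q) : Prop := ∃ w, M.run p w = some q

section Reach

variable {M : PDFA Q A}

theorem Reach.refl (p : Q) : M.Reach p p := ⟨[], rfl⟩

theorem Reach.trans {p q r : Q} (hpq : M.Reach p q) (hqr : M.Reach q r) : M.Reach p r := by
  obtain ⟨u, hu⟩ := hpq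
  obtain ⟨v, hv⟩ := hqr
  exact ⟨u ++ v, by rw [run_append, hu, Option.bind_some, hv]⟩

theorem reach_of_step {p r : Q} {a : A} (h : M.step p a = some r) : M.Reach p r :=
  ⟨[a], by simp [run, h]⟩

end Reach

def HasMergeOnCycle (M : PDFA Q A) : Prop :=
  ∃ (p q r : Q) (a : A) (w : List A), p ≠ q ∧
    M.step p a = some r ∧ M.step q a = some r ∧ M.run r w = some p

theorem not_hasMergeOnCycle_of_reversible {Q₀ : Type} [Finite Q₀] {M : PDFA Q A}
    (hM : M.Trim) (hMmin : ∀ p q, M.LangFrom p = M.LangFrom q → p = q)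
    {N : PDFA Q₀ A} (hN : N.Reversible) (hNM : N.Lang = M.Lang) : ¬M.HasMergeOnCycle := by
  rintro ⟨p, q, r, a, w, hpq, hp, hq, hw⟩
  set c := a :: w
  have hpc : M.run p c = some p := by simp [c, run, hp, hw]
  have hqc : M.run q c = some p := by simp [c, run, hq, hw]
  obtain ⟨u, hu⟩ := (hM q).1
  obtain ⟨z, hz⟩ := (hM p).2
  have hup : ∀ n, M.run M.init (u ++ wpow c (n + 1)) = some p := fun n => by
    rw [run_append, hu, Option.bind_some, Nat.add_comm, wpow_add, run_append,
      show wpow c 1 = c by simp [wpow], hqc, Option.bind_some, M.run_wpow_of_run_eq_self hpc]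
  have hmem : ∀ n, u ++ wpow c n ++ (c ++ z) ∈ N.Lang := fun n => by
    simpa [wpow_succ, hNM] using (M.mem_lang_append_iff (hup n)).2 hz
  obtain ⟨s, hs⟩ := Option.isSome_iff_exists.1
    (N.isSome_run_of_append_mem_lang (by simpa [wpow] using hmem 0))
  have hsn : ∀ n, (N.run s (wpow c n)).isSome := fun n => by
    simpa [run_append, hs] using N.isSome_run_of_append_mem_lang (hmem n)
  obtain ⟨m, hm, hsm⟩ := hN.exists_run_wpow_eq_self hsn
  have hs' : N.run N.init (u ++ wpow c (m - 1 + 1)) = some s := by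
    rw [run_append, hs, Option.bind_some, Nat.sub_add_cancel hm, hsm]
  refine hpq (hMmin p q (Set.ext fun x => ?_))
  rw [← M.mem_lang_append_iff (hup (m - 1)), ← M.mem_lang_append_iff hu, ← hNM,
    N.mem_lang_append_iff hs', N.mem_lang_append_iff hs]

theorem eq_of_step_eq_of_reach {M : PDFA Q A} (hM : ¬M.HasMergeOnCycle) {p q r : Q} {a : A}
    (hp : M.step p a = some r) (hq : M.step q a = some r) (hr : M.Reach r p) : p = q := by
  by_contra hpq
  obtain ⟨w, hw⟩ := hr
  exact hM ⟨p, q, r, a, w, hpq, hp, hq, hw⟩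

open Classical in
/-- In a state `(q, S)`, `S` holds the transitions `(p, r)` taken so far with `r` unable to reach
`p`. Along a genuine run every target in `S` reaches the current state, so the `none` branch only
cuts off unreachable configurations. -/
noncomputable def exitUnfolding (M : PDFA Q A) : PDFA (Q × Set (Q × Q)) A where
  step x a := (M.step x.1 a).bind fun r =>
    if M.Reach r x.1 then some (r, x.2)
    else if ∃ p, (p, r) ∈ x.2 then none
    else some (r, insert (x.1, r) x.2)
  init := (M.init, ∅)
  acc x := M.acc x.1

section ExitUnfolding

variable (M : PDFA Q A)

theorem exitUnfolding_step_eq_some {x z : Q} {S U : Set (Q × Q)} {a : A}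
    (h : M.exitUnfolding.step (x, S) a = some (z, U)) :
    M.step x a = some z ∧ (M.Reach z x ∧ U = S ∨
      ¬M.Reach z x ∧ (¬∃ p, (p, z) ∈ S) ∧ U = insert (x, z) S) := by
  obtain ⟨r, hr, h⟩ := Option.bind_eq_some_iff.1 h
  split_ifs at h with hrx hin <;> cases h
  · exact ⟨hr, .inl ⟨hrx, rfl⟩⟩
  · exact ⟨hr, .inr ⟨hrx, hin, rfl⟩⟩

theorem exitUnfolding_step_of_step {s r : Q} {S : Set (Q × Q)} {a : A}
    (hS : ∀ e ∈ S, M.Reach e.2 s) (h : M.step s a = some r) :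
    ∃ S', M.exitUnfolding.step (s, S) a = some (r, S') ∧ ∀ e ∈ S', M.Reach e.2 r := by
  have hSr : ∀ e ∈ S, M.Reach e.2 r := fun e he => (hS e he).trans (reach_of_step h)
  by_cases hrs : M.Reach r s
  · exact ⟨S, by simp [exitUnfolding, h, hrs], hSr⟩
  · have hfresh : ¬∃ p, (p, r) ∈ S := fun ⟨_, hp⟩ => hrs (hS _ hp)
    refine ⟨insert (s, r) S, by simp only [exitUnfolding, h, Option.bind_some, if_neg hrs,
      if_neg hfresh], ?_⟩
    rintro e (rfl | he)
    exacts [Reach.refl r, hSr e he]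

theorem exitUnfolding_run_of_run :
    ∀ {s s' : Q} {S : Set (Q × Q)} {w : List A}, (∀ e ∈ S, M.Reach e.2 s) →
      M.run s w = some s' → ∃ S', M.exitUnfolding.run (s, S) w = some (s', S')
  | _, _, S, [], _, h => ⟨S, by cases h; rfl⟩
  | _, _, _, _ :: _, hS, h => by
    obtain ⟨r, hr, hrw⟩ := Option.bind_eq_some_iff.1 h
    obtain ⟨S₁, hstep, hS₁⟩ := M.exitUnfolding_step_of_step hS hr
    obtain ⟨S', hrun⟩ := exitUnfolding_run_of_run hS₁ hrw
    exact ⟨S', by simp only [run, hstep, Option.bind_some, hrun]⟩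

theorem exitUnfolding_lang : M.exitUnfolding.Lang = M.Lang := by
  ext w
  constructor
  · rintro ⟨x, hx, hacc⟩
    exact ⟨x.1, M.run_map _ Prod.fst
      (fun _ _ _ h => (M.exitUnfolding_step_eq_some h).1) hx, hacc⟩
  · rintro ⟨s, hs, hacc⟩
    obtain ⟨S, hS⟩ := M.exitUnfolding_run_of_run (S := ∅) (by simp) hs
    exact ⟨(s, S), hS, hacc⟩

theorem exitUnfolding_reversible (hM : ¬M.HasMergeOnCycle) : M.exitUnfolding.Reversible := by
  rintro ⟨x, S⟩ ⟨y, T⟩ a ⟨z, U⟩ hx hy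
  obtain ⟨hxz, hS⟩ := M.exitUnfolding_step_eq_some hx
  obtain ⟨hyz, hT⟩ := M.exitUnfolding_step_eq_some hy
  obtain rfl : x = y := by
    by_contra hxy
    obtain ⟨-, hSz, rfl⟩ :=
      hS.resolve_left fun h => hxy (eq_of_step_eq_of_reach hM hxz hyz h.1)
    obtain ⟨-, -, hU⟩ :=
      hT.resolve_left fun h => hxy (eq_of_step_eq_of_reach hM hyz hxz h.1).symm
    rcases hU ▸ Set.mem_insert (y, z) T with h | h
    exacts [hxy (Prod.ext_iff.1 h).1.symm, hSz ⟨y, h⟩]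
  rcases hS with ⟨hzx, rfl⟩ | ⟨hzx, hSz, rfl⟩ <;>
    rcases hT with ⟨hzx', hTU⟩ | ⟨hzx', hTz, hTU⟩
  · rw [hTU]
  · exact absurd hzx hzx'
  · exact absurd hzx' hzx
  · rw [← Set.insert_sdiff_self_of_notMem fun h => hSz ⟨x, h⟩, hTU,
      Set.insert_sdiff_self_of_notMem fun h => hTz ⟨x, h⟩]

end ExitUnfolding

end PDFA

/-- A regular language is reversible iff its minimal trim partial DFA
contains no pattern of distinct states `p ≠ q`, a letter `a`, and a word `w` with
`p·a = q·a` and `(p·a)·w = p`. -/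
theorem stmt17 {Q A : Type} [Fintype Q] (M : PDFA Q A)
    (hMtrim : M.Trim)
    (hMmin : ∀ p q : Q, M.LangFrom p = M.LangFrom q → p = q) :
    (∃ (Q₀ : Type) (_ : Fintype Q₀) (N : PDFA Q₀ A),
      N.Reversible ∧ N.Lang = M.Lang)
    ↔ ¬ ∃ (p q r : Q) (a : A) (w : List A), p ≠ q ∧
        M.step p a = some r ∧ M.step q a = some r ∧ M.run r w = some p := by
  constructor
  · rintro ⟨Q₀, _, N, hN, hNM⟩
    exact PDFA.not_hasMergeOnCycle_of_reversible hMtrim hMmin hN hNM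
  · intro hM
    exact ⟨_, Fintype.ofFinite _, M.exitUnfolding, M.exitUnfolding_reversible hM,
      M.exitUnfolding_lang⟩
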